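/- Let f_n : ℝ^d → ℝ be convex functions converging pointwise to a strictly convex function f that attains a unique minimizer x*. If x_n is a minimizer of f_n for each n, and the sequence (x_n) is bounded, then x_n → x*. -/

import Mathlib

/-!
On a neighbourhood of any point `y`, the convex functions `f n` are eventually bounded above by a
common constant: `y` lies inside a simplex, a convex function is bounded on a simplex by its values
at the vertices, and these converge. Convexity along the line through `x n` and `y` then turns this
upper bound into the lower bound `f n y + (‖x n - y‖ / r) (f n y - M) ≤ f n (x n) ≤ f n z`, which
passes to the limit along `x n → y`. Hence every cluster point of the bounded sequence `x n`
minimizes `g`, so it is `x*`, and `x n → x*` by compactness.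
-/

open Filter Set Metric Topology

variable {E : Type*} [NormedAddCommGroup E] [NormedSpace ℝ E]

theorem ConvexOn.le_apply_of_le_on_closedBall {f : E → ℝ} (hf : ConvexOn ℝ univ f) {y : E}
    {r M : ℝ} (hr : 0 < r) (hM : ∀ w ∈ closedBall y r, f w ≤ M) (x : E) :
    f y + ‖x - y‖ / r * (f y - M) ≤ f x := by
  rcases eq_or_ne x y with rfl | hxy
  · simp
  set t := ‖x - y‖ / r
  have hnorm : 0 < ‖x - y‖ := norm_pos_iff.2 (sub_ne_zero.2 hxy)
  have ht : 0 < t := div_pos hnorm hr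
  -- `w` is the point at distance `r` from `y` on the far side of `y` from `x`.
  set w := y + (r / ‖x - y‖) • (y - x)
  have hw : f w ≤ M := hM w <| by
    rw [mem_closedBall, dist_eq_norm, add_sub_cancel_left, norm_smul, norm_sub_rev y x,
      Real.norm_of_nonneg (div_pos hr hnorm).le, div_mul_cancel₀ _ hnorm.ne']
  have hy : (1 / (1 + t)) • x + (t / (1 + t)) • w = y := by
    simp only [w, t]
    match_scalars <;> field_simp <;> ring
  have hconv := hf.2 (mem_univ x) (mem_univ w) (by positivity) (by positivity)
    (by field_simp : 1 / (1 + t) + t / (1 + t) = 1)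
  rw [hy, smul_eq_mul, smul_eq_mul] at hconv
  have h1t : 0 < 1 + t := by positivity
  have : (1 + t) * f y ≤ f x + t * M := by
    calc (1 + t) * f y ≤ (1 + t) * (1 / (1 + t) * f x + t / (1 + t) * f w) := by gcongr
      _ = f x + t * f w := by field_simp
      _ ≤ f x + t * M := by gcongr
  linarith

theorem exists_nhds_eventually_forall_le_of_convexOn [FiniteDimensional ℝ E] {ι : Type*}
    {l : Filter ι} {F : ι → E → ℝ} (hF : ∀ i, ConvexOn ℝ univ (F i))
    (hbdd : ∀ z, IsBoundedUnder (· ≤ ·) l fun i => F i z) (y : E) :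
    ∃ U ∈ 𝓝 y, ∃ M, ∀ᶠ i in l, ∀ w ∈ U, F i w ≤ M := by
  obtain ⟨b, hy, -⟩ := exists_mem_interior_convexHull_affineBasis (univ_mem : univ ∈ 𝓝 y)
  obtain ⟨M, hM⟩ := isBoundedUnder_le_finset_sup' Finset.univ_nonempty
    (F := fun j i => F i (b j)) fun j _ => hbdd (b j)
  refine ⟨_, isOpen_interior.mem_nhds hy, M, (eventually_map.1 hM).mono fun i hi w hw => ?_⟩
  obtain ⟨_, ⟨j, rfl⟩, hj⟩ := (hF i).exists_ge_of_mem_convexHull (subset_univ _) (interior_subset hw)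
  exact hj.trans ((Finset.le_sup' (fun j => F i (b j)) (Finset.mem_univ j)).trans hi)

theorem le_of_mapClusterPt_of_isMin [FiniteDimensional ℝ E] {ι : Type*} {l : Filter ι}
    {F : ι → E → ℝ} {G : E → ℝ} {x : ι → E} {y : E} (hF : ∀ i, ConvexOn ℝ univ (F i))
    (hFG : ∀ z, Tendsto (fun i => F i z) l (𝓝 (G z))) (hx : ∀ i z, F i (x i) ≤ F i z)
    (hy : MapClusterPt y l x) (z : E) : G y ≤ G z := by
  obtain ⟨U, hU, M, hM⟩ :=
    exists_nhds_eventually_forall_le_of_convexOn hF (fun z => (hFG z).isBoundedUnder_le) y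
  obtain ⟨r, hr, hrU⟩ := nhds_basis_closedBall.mem_iff.1 hU
  set L := comap x (𝓝 y) ⊓ l
  have : NeBot L := neBot_inf_comap_iff_map'.2 hy
  have hlow : ∀ᶠ i in L, F i y + ‖x i - y‖ / r * (F i y - M) ≤ F i z :=
    (hM.filter_mono inf_le_right).mono fun i hi =>
      ((hF i).le_apply_of_le_on_closedBall hr (fun w hw => hi w (hrU hw)) (x i)).trans (hx i z)
  have hxy : Tendsto x L (𝓝 y) := tendsto_comap.mono_left inf_le_left
  have hFy : Tendsto (fun i => F i y) L (𝓝 (G y)) := (hFG y).mono_left inf_le_right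
  have hlim : Tendsto (fun i => F i y + ‖x i - y‖ / r * (F i y - M)) L (𝓝 (G y)) := by
    simpa using hFy.add (((hxy.sub_const y).norm.div_const r).mul (hFy.sub_const M))
  exact le_of_tendsto_of_tendsto hlim ((hFG z).mono_left inf_le_right) hlow

theorem argmin_convergence_general {d : ℕ}
    (f : ℕ → EuclideanSpace ℝ (Fin d) → ℝ) (g : EuclideanSpace ℝ (Fin d) → ℝ)
    (hconv : ∀ n, ConvexOn ℝ Set.univ (f n))
    (hpt : ∀ x, Tendsto (fun n => f n x) atTop (nhds (g x)))
    (xstar : EuclideanSpace ℝ (Fin d))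
    (huniq : ∀ y, (∀ z, g y ≤ g z) → y = xstar)
    (x : ℕ → EuclideanSpace ℝ (Fin d))
    (hx : ∀ n, ∀ y, f n (x n) ≤ f n y)
    (hbdd : ∃ C : ℝ, ∀ n, ‖x n‖ ≤ C) :
    Tendsto x atTop (nhds xstar) := by
  obtain ⟨C, hC⟩ := hbdd
  exact (isCompact_closedBall 0 C).tendsto_nhds_of_unique_mapClusterPt
    (Eventually.of_forall fun n => mem_closedBall_zero_iff.2 (hC n))
    fun y _ hy => huniq y (le_of_mapClusterPt_of_isMin hconv hpt hx hy)

/-- Argmin continuity: if convex `f_n` converge pointwise to a strictly convex `f` with unique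
minimizer `x*`, and `x_n` are minimizers of `f_n` forming a bounded sequence, then `x_n → x*`. -/
theorem argmin_convergence {d : ℕ}
    (f : ℕ → EuclideanSpace ℝ (Fin d) → ℝ) (g : EuclideanSpace ℝ (Fin d) → ℝ)
    (hconv : ∀ n, ConvexOn ℝ Set.univ (f n))
    (hpt : ∀ x, Tendsto (fun n => f n x) atTop (nhds (g x)))
    (hstrict : StrictConvexOn ℝ Set.univ g)
    (xstar : EuclideanSpace ℝ (Fin d))
    (hmin : ∀ y, g xstar ≤ g y)
    (huniq : ∀ y, (∀ z, g y ≤ g z) → y = xstar)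
    (x : ℕ → EuclideanSpace ℝ (Fin d))
    (hx : ∀ n, ∀ y, f n (x n) ≤ f n y)
    (hbdd : ∃ C : ℝ, ∀ n, ‖x n‖ ≤ C) :
    Tendsto x atTop (nhds xstar) :=
  argmin_convergence_general f g hconv hpt xstar huniq x hx hbdd
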